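/- Let V_n denote the monic Chebyshev polynomials of the second kind (V_n(2cos θ) = sin((n+1)θ)/sin θ), and for k ≥ 0 set W_{2k} = V_{6k+1}, W_{2k+1} = V_{6k+3}. Then deg W_n = 2n + 2·⌊n/2⌋ + 1 for all n ≥ 0, and the span of {W_k : k ≥ 0} equals the direct sum T_1·ℝ[T_6] ⊕ T_1·T_2·ℝ[T_6], where T_n are the monic Chebyshev polynomials of the first kind. -/

import Mathlib

/-- Monic Chebyshev polynomial of the first kind: `Tp n` evaluated at `2 cos θ` is `2 cos (n θ)`. -/
noncomputable def Tp (n : ℤ) : Polynomial ℝ :=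
  Polynomial.C 2 * (Polynomial.Chebyshev.T ℝ n).comp (Polynomial.C (1 / 2) * Polynomial.X)

/-- Monic Chebyshev polynomial of the second kind:
`Vp n` evaluated at `2 cos θ` is `sin ((n+1) θ) / sin θ`. -/
noncomputable def Vp (n : ℤ) : Polynomial ℝ :=
  (Polynomial.Chebyshev.U ℝ n).comp (Polynomial.C (1 / 2) * Polynomial.X)

/-- `W_{2k} = V_{6k+1}`, `W_{2k+1} = V_{6k+3}`. -/
noncomputable def W (n : ℕ) : Polynomial ℝ :=
  if n % 2 = 0 then Vp (6 * (n / 2) + 1) else Vp (6 * (n / 2) + 3)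

/-!
Over `ℝ`, `Tp n` and `Vp n` are Mathlib's rescaled Chebyshev polynomials `C ℝ n` and `S ℝ n`,
and everything follows from the product formula `C m * S n = S (n + m) + S (n - m)` together with
`S (-n - 2) = -S n`, `C 1 = S 1` and `C 1 * C 2 = S 3`.

Both `span (range W)` and `M = T₁ ℝ[T₆] + T₁ T₂ ℝ[T₆]` are submodules of `ℝ[X]` that are stable
under multiplication by `T₆` and contain `V₁ = T₁` and `V₃ = T₁ T₂`. A `T₆`-stable submodule
containing `V₁` and `V₃` contains every `V_j` with `j ≡ 1, 3 (mod 6)`, by the recursion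
`V_{j+6} = T₆ V_j - V_{j-6}` started from `V_{-5} = -V₃` and `V_{-3} = -V₁`; conversely it contains
`V₁ q(T₆)` and `V₃ q(T₆)` for every `q`. Hence the two submodules coincide. The sum is direct
because nonzero elements of the two summands have degrees `≡ 1` and `≡ 3 (mod 6)`.
-/

open Polynomial Submodule Module.End

namespace Polynomial.Chebyshev

variable (R : Type*) [CommRing R]

theorem C_mul_S (m n : ℤ) : C R m * S R n = S R (n + m) + S R (n - m) := by
  induction m using Polynomial.Chebyshev.induct with
  | zero => simp [two_mul]
  | one => simp only [C_one, S_add_one, sub_add_cancel]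
  | add_two m ih1 ih2 =>
    have h₁ := S_add_two R (n + m)
    have h₂ := S_sub_two R (n - m)
    linear_combination (norm := ring_nf) S R n * C_add_two R m + X * ih1 - ih2 - h₁ - h₂
  | neg_add_one m ih1 ih2 =>
    have h₁ := S_add_two R (n + (-m - 1))
    have h₂ := S_sub_two R (n - (-m - 1))
    linear_combination (norm := ring_nf) S R n * C_add_two R (-m - 1) + X * ih1 - ih2 - h₁ - h₂

theorem C_one_mul_C_two : C R 1 * C R 2 = S R 3 := by
  simpa [mul_comm] using C_mul_S R 2 1

variable {R}

theorem S_add_mul_mem {M : Submodule R R[X]} {m n : ℤ}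
    (hM : M ∈ invtSubmodule (LinearMap.mulLeft R (C R m)))
    (h₀ : S R (n - m) ∈ M) (h₁ : S R n ∈ M) (k : ℕ) : S R (n + k * m) ∈ M := by
  suffices ∀ k : ℕ, S R (n + (k - 1) * m) ∈ M ∧ S R (n + k * m) ∈ M from (this k).2
  intro k
  induction k with
  | zero => simpa using ⟨h₀, h₁⟩
  | succ k ih =>
    refine ⟨by simpa using ih.2, ?_⟩
    have hrec : S R (n + (k + 1 : ℕ) * m) = C R m * S R (n + k * m) - S R (n + (k - 1) * m) := by
      push_cast
      linear_combination (norm := ring_nf) -C_mul_S R m (n + k * m)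
    rw [hrec]
    exact M.sub_mem (hM ih.2) ih.1

variable {K : Type*} [Field K] [NeZero (2 : K)]

theorem natDegree_S_natCast (n : ℕ) : (S K n).natDegree = n := by
  let := invertibleOfNonzero (two_ne_zero' K)
  rw [S_eq_U_comp_half_mul_X, natDegree_comp, natDegree_U_natCast,
    natDegree_C_mul_X _ (by simp [NeZero.ne]), mul_one]

theorem natDegree_C (n : ℤ) : (C K n).natDegree = n.natAbs := by
  let := invertibleOfNonzero (two_ne_zero' K)
  rw [C_eq_two_mul_T_comp_half_mul_X, ← C_ofNat, natDegree_C_mul (two_ne_zero' K), natDegree_comp,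
    natDegree_T, natDegree_C_mul_X _ (by simp [NeZero.ne]), mul_one]

end Polynomial.Chebyshev

namespace Polynomial

variable {R : Type*} [CommRing R]

theorem mem_span_mul_comp_iff {a t p : R[X]} :
    p ∈ span R {p | ∃ q : R[X], p = a * q.comp t} ↔ ∃ q : R[X], p = a * q.comp t := by
  refine ⟨fun hp => ?_, fun hp => subset_span hp⟩
  induction hp using span_induction with
  | mem p hp => exact hp
  | zero => exact ⟨0, by simp⟩
  | add p p' _ _ hp hp' =>
    obtain ⟨q, rfl⟩ := hp
    obtain ⟨q', rfl⟩ := hp'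
    exact ⟨q + q', by rw [add_comp, mul_add]⟩
  | smul c p _ hp =>
    obtain ⟨q, rfl⟩ := hp
    exact ⟨c • q, by rw [smul_comp, mul_smul_comm]⟩

theorem self_mem_span_mul_comp (a t : R[X]) : a ∈ span R {p | ∃ q : R[X], p = a * q.comp t} :=
  subset_span ⟨1, by simp⟩

theorem span_mul_comp_mem_invtSubmodule (a t : R[X]) :
    span R {p | ∃ q : R[X], p = a * q.comp t} ∈ invtSubmodule (LinearMap.mulLeft R t) := by
  intro p hp
  obtain ⟨q, rfl⟩ := mem_span_mul_comp_iff.1 hp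
  refine mem_span_mul_comp_iff.2 ⟨X * q, ?_⟩
  simp only [LinearMap.mulLeft_apply, mul_comp, X_comp]
  ring

theorem mul_comp_mem_of_mem_invtSubmodule {M : Submodule R R[X]} {t p : R[X]}
    (hM : M ∈ invtSubmodule (LinearMap.mulLeft R t)) (hp : p ∈ M) (q : R[X]) :
    p * q.comp t ∈ M := by
  induction q using Polynomial.induction_on with
  | C a =>
    rw [C_comp, mul_comm, ← smul_eq_C_mul]
    exact M.smul_mem a hp
  | add q q' hq hq' => simpa [add_comp, mul_add] using M.add_mem hq hq'
  | monomial n a hn =>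
    have h := hM hn
    rw [mem_comap, LinearMap.mulLeft_apply] at h
    convert h using 1
    simp only [mul_comp, pow_succ, X_comp, C_comp, pow_comp]
    ring

theorem span_mul_comp_le {M : Submodule R R[X]} {a t : R[X]}
    (hM : M ∈ invtSubmodule (LinearMap.mulLeft R t)) (ha : a ∈ M) :
    span R {p | ∃ q : R[X], p = a * q.comp t} ≤ M :=
  span_le.2 fun _ ⟨q, hq⟩ => hq ▸ mul_comp_mem_of_mem_invtSubmodule hM ha q

theorem span_mul_comp_inf_eq_bot [IsDomain R] {a b t : R[X]}
    (h : ¬ a.natDegree ≡ b.natDegree [MOD t.natDegree]) :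
    span R {p | ∃ q : R[X], p = a * q.comp t} ⊓ span R {p | ∃ q : R[X], p = b * q.comp t} = ⊥ := by
  refine eq_bot_iff.2 fun p hp => (mem_bot R).2 ?_
  obtain ⟨⟨q, hq⟩, ⟨r, hr⟩⟩ :=
    And.imp mem_span_mul_comp_iff.1 mem_span_mul_comp_iff.1 (mem_inf.1 hp)
  by_contra hp0
  have hqa := mul_ne_zero_iff.1 (hq ▸ hp0)
  have hrb := mul_ne_zero_iff.1 (hr ▸ hp0)
  have hdeg := congrArg natDegree (hq.symm.trans hr)
  rw [natDegree_mul hqa.1 hqa.2, natDegree_mul hrb.1 hrb.2, natDegree_comp, natDegree_comp] at hdeg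
  exact h (by simpa [Nat.ModEq, Nat.add_mul_mod_self_right] using congrArg (· % t.natDegree) hdeg)

end Polynomial

theorem Tp_eq_chebyshevC (n : ℤ) : Tp n = Chebyshev.C ℝ n := by
  simp [Tp, Chebyshev.C_eq_two_mul_T_comp_half_mul_X, map_ofNat]

theorem Vp_eq_chebyshevS (n : ℤ) : Vp n = Chebyshev.S ℝ n := by
  simp [Vp, Chebyshev.S_eq_U_comp_half_mul_X]

section

open Polynomial.Chebyshev

theorem W_two_mul (k : ℕ) : W (2 * k) = S ℝ (1 + k * 6) := by
  rw [W, if_pos (by omega), Vp_eq_chebyshevS]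
  congr 1
  omega

theorem W_two_mul_add_one (k : ℕ) : W (2 * k + 1) = S ℝ (3 + k * 6) := by
  rw [W, if_neg (by omega), Vp_eq_chebyshevS]
  congr 1
  omega

theorem natDegree_W (n : ℕ) : (W n).natDegree = 2 * n + 2 * (n / 2) + 1 := by
  obtain ⟨k, rfl | rfl⟩ := Nat.even_or_odd' n
  · rw [W_two_mul, show (1 + k * 6 : ℤ) = (6 * k + 1 : ℕ) by push_cast; ring,
      natDegree_S_natCast]
    omega
  · rw [W_two_mul_add_one, show (3 + k * 6 : ℤ) = (6 * k + 3 : ℕ) by push_cast; ring,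
      natDegree_S_natCast]
    omega

theorem S_mem_span_range_W {j : ℤ} (hj : j % 6 = 1 ∨ j % 6 = 3) :
    S ℝ j ∈ span ℝ (Set.range W) := by
  have hW : ∀ i : ℤ, 0 ≤ i → i % 6 = 1 ∨ i % 6 = 3 → S ℝ i ∈ span ℝ (Set.range W) := by
    intro i hi₀ hi
    lift i to ℕ using hi₀
    rcases hi with h | h
    · exact subset_span ⟨2 * (i / 6), by rw [W_two_mul]; congr 1; omega⟩
    · exact subset_span ⟨2 * (i / 6) + 1, by rw [W_two_mul_add_one]; congr 1; omega⟩
  rcases le_or_gt 0 j with hj₀ | hj₀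
  · exact hW j hj₀ hj
  · have h := S_neg_sub_two ℝ (-j - 2)
    rw [show -(-j - 2) - 2 = j by ring] at h
    rw [h]
    exact neg_mem (hW _ (by omega) (by omega))

theorem span_range_W_mem_invtSubmodule :
    span ℝ (Set.range W) ∈ invtSubmodule (LinearMap.mulLeft ℝ (C ℝ 6)) := by
  rw [mem_invtSubmodule, span_le]
  rintro _ ⟨n, rfl⟩
  rw [SetLike.mem_coe, mem_comap, LinearMap.mulLeft_apply]
  obtain ⟨j, hj, hWj⟩ : ∃ j : ℤ, (j % 6 = 1 ∨ j % 6 = 3) ∧ W n = S ℝ j := by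
    obtain ⟨k, rfl | rfl⟩ := Nat.even_or_odd' n
    · exact ⟨_, by omega, W_two_mul k⟩
    · exact ⟨_, by omega, W_two_mul_add_one k⟩
  rw [hWj, C_mul_S]
  exact add_mem (S_mem_span_range_W (by omega)) (S_mem_span_range_W (by omega))

theorem span_range_W_le {M : Submodule ℝ ℝ[X]}
    (hM : M ∈ invtSubmodule (LinearMap.mulLeft ℝ (C ℝ 6))) (h₁ : S ℝ 1 ∈ M) (h₃ : S ℝ 3 ∈ M) :
    span ℝ (Set.range W) ≤ M := by
  rw [span_le]
  rintro _ ⟨n, rfl⟩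
  obtain ⟨k, rfl | rfl⟩ := Nat.even_or_odd' n
  · rw [W_two_mul]
    refine S_add_mul_mem hM ?_ h₁ k
    rw [show (1 : ℤ) - 6 = -3 - 2 by norm_num, S_neg_sub_two]
    exact neg_mem h₃
  · rw [W_two_mul_add_one]
    refine S_add_mul_mem hM ?_ h₃ k
    rw [show (3 : ℤ) - 6 = -1 - 2 by norm_num, S_neg_sub_two]
    exact neg_mem h₁

end

theorem stmt_18 :
    (∀ n : ℕ, (W n).natDegree = 2 * n + 2 * (n / 2) + 1) ∧
      Submodule.span ℝ (Set.range W) =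
        Submodule.span ℝ {p : Polynomial ℝ | ∃ q : Polynomial ℝ, p = Tp 1 * q.comp (Tp 6)} ⊔
          Submodule.span ℝ
            {p : Polynomial ℝ | ∃ q : Polynomial ℝ, p = Tp 1 * Tp 2 * q.comp (Tp 6)} ∧
      Submodule.span ℝ {p : Polynomial ℝ | ∃ q : Polynomial ℝ, p = Tp 1 * q.comp (Tp 6)} ⊓
          Submodule.span ℝ
            {p : Polynomial ℝ | ∃ q : Polynomial ℝ, p = Tp 1 * Tp 2 * q.comp (Tp 6)} = ⊥ := by
  simp only [Tp_eq_chebyshevC, Chebyshev.C_one_mul_C_two]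
  simp only [Chebyshev.C_one, ← Chebyshev.S_one ℝ]
  have hM₁ := span_mul_comp_mem_invtSubmodule (Chebyshev.S ℝ 1) (Chebyshev.C ℝ 6)
  have hM₃ := span_mul_comp_mem_invtSubmodule (Chebyshev.S ℝ 3) (Chebyshev.C ℝ 6)
  have hN := span_range_W_mem_invtSubmodule
  refine ⟨natDegree_W, le_antisymm ?_ ?_, span_mul_comp_inf_eq_bot ?_⟩
  · exact span_range_W_le (invtSubmodule.sup_mem hM₁ hM₃)
      (mem_sup_left (self_mem_span_mul_comp _ _)) (mem_sup_right (self_mem_span_mul_comp _ _))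
  · exact sup_le (span_mul_comp_le hN (S_mem_span_range_W (j := 1) (by norm_num)))
      (span_mul_comp_le hN (S_mem_span_range_W (j := 3) (by norm_num)))
  · rw [show (1 : ℤ) = (1 : ℕ) from rfl, show (3 : ℤ) = (3 : ℕ) from rfl,
      Chebyshev.natDegree_S_natCast, Chebyshev.natDegree_S_natCast, Chebyshev.natDegree_C]
    decide
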